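/- arXiv:2209.13950 — 10 statements merged into one kernel-verified Lean document; each statement's English description precedes it below -/
import Mathlib

section
/- For every natural number a and every real number θ, the accuracy function of the frequent outcome approach satisfies the recursion π_{2a+1}(θ) = π_{2a}(θ) + H_a(θ), where H_a(θ) := binom(2a, a) · ( (1/2)·θ^a·(1−θ)^a − 2·θ^{a+1}·(1−θ)^{a+1} ). -/
/-! Write `b = binom(2a, a) θᵃ (1-θ)ᵃ` for the central term and `L` for the lower tail
`∑_{n ≤ a} binom(2a, n) θⁿ (1-θ)^(2a-n)`. As the binomial probabilities sum to one, the tie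
weight `1/2` at `n = a` gives `π_{2a} = θ + (1 - 2θ) L + (θ - 1/2) b`. With `2a + 1` trials there is
no tie, and Pascal's rule turns the lower tail `∑_{n ≤ a}` into `L - θ b`, so
`π_{2a+1} = θ + (1 - 2θ)(L - θ b)`. The difference is `(1/2 - 2θ(1-θ)) b = H_a(θ)`. -/

open Finset

/-- Prediction weight of the frequent outcome approach. -/
noncomputable def w (k n : ℕ) (θ : ℝ) : ℝ :=
  if 2 * n < k then 1 - θ else if 2 * n = k then 1 / 2 else θ

/-- Accuracy function of the frequent outcome approach. -/
noncomputable def acc (k : ℕ) (θ : ℝ) : ℝ :=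
  ∑ n ∈ Finset.range (k + 1), w k n θ * (k.choose n) * θ ^ n * (1 - θ) ^ (k - n)

/-- The correction term `H_a`. -/
noncomputable def H (a : ℕ) (θ : ℝ) : ℝ :=
  ((2 * a).choose a : ℝ) * ((1 / 2) * θ ^ a * (1 - θ) ^ a - 2 * θ ^ (a + 1) * (1 - θ) ^ (a + 1))

noncomputable def binomialTerm (k n : ℕ) (θ : ℝ) : ℝ :=
  (k.choose n : ℝ) * θ ^ n * (1 - θ) ^ (k - n)

section binomialTerm

variable (θ : ℝ)

theorem sum_range_binomialTerm (k : ℕ) : ∑ n ∈ range (k + 1), binomialTerm k n θ = 1 := by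
  have h := add_pow θ (1 - θ) k
  rw [add_sub_cancel, one_pow] at h
  rw [h]
  refine sum_congr rfl fun n _ => ?_
  rw [binomialTerm]
  ring

theorem binomialTerm_succ_zero (k : ℕ) :
    binomialTerm (k + 1) 0 θ = (1 - θ) * binomialTerm k 0 θ := by
  simp only [binomialTerm, Nat.choose_zero_right, Nat.sub_zero, pow_succ]
  ring

/-- Pascal's rule; truncated subtraction makes it hold for every `n`, both sides vanishing
when `k < n`. -/
theorem binomialTerm_succ_succ (k n : ℕ) :
    binomialTerm (k + 1) (n + 1) θ =
      (1 - θ) * binomialTerm k (n + 1) θ + θ * binomialTerm k n θ := by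
  simp only [binomialTerm, Nat.choose_succ_succ, Nat.cast_add]
  rcases lt_or_ge n k with hn | hn
  · rw [show k + 1 - (n + 1) = k - (n + 1) + 1 by omega, show k - n = k - (n + 1) + 1 by omega]
    ring
  · rw [Nat.choose_eq_zero_of_lt (by omega : k < n + 1),
      show k + 1 - (n + 1) = k - n by omega]
    ring

theorem sum_range_succ_binomialTerm_succ (k m : ℕ) :
    ∑ n ∈ range (m + 1), binomialTerm (k + 1) n θ =
      (1 - θ) * ∑ n ∈ range (m + 1), binomialTerm k n θ +
        θ * ∑ n ∈ range m, binomialTerm k n θ := by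
  simp only [sum_range_succ' _ m, binomialTerm_succ_succ, binomialTerm_succ_zero, sum_add_distrib,
    mul_add, mul_sum]
  ring

end binomialTerm

theorem acc_eq_sum_w_mul_binomialTerm (k : ℕ) (θ : ℝ) :
    acc k θ = ∑ n ∈ range (k + 1), w k n θ * binomialTerm k n θ := by
  simp only [acc, binomialTerm, mul_assoc]

theorem w_of_two_mul_lt {k n : ℕ} (θ : ℝ) (h : 2 * n < k) : w k n θ = 1 - θ := if_pos h

theorem w_two_mul (a : ℕ) (θ : ℝ) : w (2 * a) a θ = 1 / 2 := by
  simp [w]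

theorem w_of_lt_two_mul {k n : ℕ} (θ : ℝ) (h : k < 2 * n) : w k n θ = θ := by
  rw [w, if_neg (by omega), if_neg (by omega)]

theorem sum_mul_binomialTerm_of_threshold {k m : ℕ} {θ : ℝ} (v : ℕ → ℝ) (hm : m ≤ k + 1)
    (h_lower : ∀ n < m, v n = 1 - θ) (h_upper : ∀ n, m ≤ n → n ≤ k → v n = θ) :
    ∑ n ∈ range (k + 1), v n * binomialTerm k n θ =
      (1 - θ) * ∑ n ∈ range m, binomialTerm k n θ +
        θ * (1 - ∑ n ∈ range m, binomialTerm k n θ) := by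
  have h_total := sum_range_binomialTerm θ k
  rw [← sum_range_add_sum_Ico _ hm] at h_total
  rw [← sum_range_add_sum_Ico _ hm, ← eq_sub_of_add_eq' h_total, mul_sum, mul_sum]
  congr 1
  · exact sum_congr rfl fun n hn => by rw [h_lower n (mem_range.mp hn)]
  · refine sum_congr rfl fun n hn => ?_
    obtain ⟨hmn, hnk⟩ := mem_Ico.mp hn
    rw [h_upper n hmn (Nat.lt_succ_iff.mp hnk)]

theorem acc_two_mul_add_one (a : ℕ) (θ : ℝ) :
    acc (2 * a + 1) θ = (1 - θ) * ∑ n ∈ range (a + 1), binomialTerm (2 * a + 1) n θ +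
      θ * (1 - ∑ n ∈ range (a + 1), binomialTerm (2 * a + 1) n θ) := by
  rw [acc_eq_sum_w_mul_binomialTerm]
  exact sum_mul_binomialTerm_of_threshold (m := a + 1) _ (by omega)
    (fun _ hn => w_of_two_mul_lt θ (by omega)) (fun _ hn _ => w_of_lt_two_mul θ (by omega))

/-- Raising the tie weight at `n = a` from `1/2` to `1 - θ` turns `w (2 * a)` into a threshold
weight. -/
theorem acc_two_mul (a : ℕ) (θ : ℝ) :
    acc (2 * a) θ = (1 - θ) * ∑ n ∈ range (a + 1), binomialTerm (2 * a) n θ +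
      θ * (1 - ∑ n ∈ range (a + 1), binomialTerm (2 * a) n θ) +
        (θ - 1 / 2) * binomialTerm (2 * a) a θ := by
  have h_raised := sum_mul_binomialTerm_of_threshold (k := 2 * a) (m := a + 1)
    (fun n => w (2 * a) n θ + if n = a then 1 / 2 - θ else 0) (by omega)
    (fun n hn => by
      rcases Nat.lt_succ_iff_lt_or_eq.mp hn with hn | rfl
      · rw [w_of_two_mul_lt θ (by omega), if_neg hn.ne, add_zero]
      · rw [w_two_mul, if_pos rfl]
        ring)
    (fun n hn _ => by rw [w_of_lt_two_mul θ (by omega), if_neg (by omega), add_zero])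
  rw [← h_raised, acc_eq_sum_w_mul_binomialTerm]
  simp only [add_mul, sum_add_distrib, ite_mul, zero_mul, sum_ite_eq', mem_range,
    show a < 2 * a + 1 by omega, if_true]
  ring

theorem H_eq_binomialTerm_mul (a : ℕ) (θ : ℝ) :
    H a θ = binomialTerm (2 * a) a θ * (1 / 2 - 2 * θ * (1 - θ)) := by
  rw [H, binomialTerm, show 2 * a - a = a by omega]
  ring

theorem accuracy_recursion (a : ℕ) (θ : ℝ) :
    acc (2 * a + 1) θ = acc (2 * a) θ + H a θ := by
  rw [acc_two_mul_add_one, acc_two_mul, sum_range_succ_binomialTerm_succ, H_eq_binomialTerm_mul,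
    sum_range_succ _ a]
  ring
end

section
/- For every natural number a and every real number θ, the accuracy function of the frequent outcome approach satisfies π_{2a+2}(θ) = π_{2a+1}(θ); that is, the accuracy is unchanged in passing from an odd number of observed trials 2a+1 to an even number 2a+2. -/
open Finset

/-!
Splitting `C(k+1, n) = C(k, n) + C(k, n-1)` (degree elevation of Bernstein sums) writes
`π_{k+1}` as a sum over the degree-`k` Bernstein basis with weights
`(1-θ) w_{k+1,n} + θ w_{k+1,n+1}`. For `k = 2a+1` these agree with `w_{k,n}` except at `n = a`
and `n = a+1`, where the defects are `θ (θ - 1/2)` and `(1-θ) (1/2 - θ)`; since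
`C(2a+1, a) = C(2a+1, a+1)`, the two remaining terms are
`± C(2a+1, a) θ^(a+1) (1-θ)^(a+1) (θ - 1/2)` and cancel.
-/

theorem sum_choose_succ_mul_pow_mul_pow {R : Type*} [CommSemiring R] (g : ℕ → R) (x y : R)
    (k : ℕ) :
    ∑ n ∈ range (k + 2), g n * (k + 1).choose n * x ^ n * y ^ (k + 1 - n) =
      ∑ n ∈ range (k + 1), (y * g n + x * g (n + 1)) * k.choose n * x ^ n * y ^ (k - n) := by
  have hlow : ∑ n ∈ range (k + 2), g n * k.choose n * x ^ n * y ^ (k + 1 - n) =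
      ∑ n ∈ range (k + 1), y * g n * k.choose n * x ^ n * y ^ (k - n) := by
    rw [sum_range_succ, Nat.choose_succ_self, Nat.cast_zero, mul_zero, zero_mul, zero_mul,
      add_zero]
    refine sum_congr rfl fun n hn => ?_
    rw [Nat.sub_add_comm (mem_range_succ_iff.1 hn), pow_succ]
    ring
  have hpascal : ∑ n ∈ range (k + 2), g n * (k + 1).choose n * x ^ n * y ^ (k + 1 - n) =
      ∑ n ∈ range (k + 2), g n * k.choose n * x ^ n * y ^ (k + 1 - n) +
        ∑ n ∈ range (k + 1), g (n + 1) * k.choose n * x ^ (n + 1) * y ^ (k - n) := by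
    rw [sum_range_succ', sum_range_succ' (fun n => g n * k.choose n * x ^ n * y ^ (k + 1 - n))]
    simp only [Nat.choose_succ_succ, Nat.cast_add, Nat.choose_zero_right, Nat.add_sub_add_right,
      add_mul, mul_add, sum_add_distrib]
    ring
  rw [hpascal, hlow, ← sum_add_distrib]
  exact sum_congr rfl fun n _ => by ring

theorem acc_succ (k : ℕ) (θ : ℝ) :
    acc (k + 1) θ = ∑ n ∈ range (k + 1),
      ((1 - θ) * w (k + 1) n θ + θ * w (k + 1) (n + 1) θ) * k.choose n * θ ^ n *
        (1 - θ) ^ (k - n) :=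
  sum_choose_succ_mul_pow_mul_pow (fun n => w (k + 1) n θ) θ (1 - θ) k

theorem elevated_w_sub_w_odd (a n : ℕ) (θ : ℝ) :
    (1 - θ) * w (2 * a + 2) n θ + θ * w (2 * a + 2) (n + 1) θ - w (2 * a + 1) n θ =
      if n = a then θ * (θ - 1 / 2) else if n = a + 1 then (1 - θ) * (1 / 2 - θ) else 0 := by
  unfold w
  split_ifs <;> first | omega | ring

theorem accuracy_odd_to_even (a : ℕ) (θ : ℝ) :
    acc (2 * a + 2) θ = acc (2 * a + 1) θ := by
  rw [acc_succ, acc, ← sub_eq_zero, ← sum_sub_distrib]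
  simp_rw [← sub_mul, elevated_w_sub_w_odd]
  rw [sum_eq_add_of_mem a (a + 1) (mem_range.2 (by omega)) (mem_range.2 (by omega)) (by omega)
    fun n _ hn => by simp [hn.1, hn.2]]
  simp only [↓reduceIte, if_neg (Nat.succ_ne_self a), Nat.choose_symm_half,
    show 2 * a + 1 - a = a + 1 by omega, show 2 * a + 1 - (a + 1) = a by omega]
  ring
end

section
/- For every real number θ with 0 ≤ θ ≤ 1, the accuracy function of the frequent outcome approach converges to the accuracy of ideal prediction: lim_{k→∞} π_k(θ) = max(θ, 1−θ). -/
open Finset Filter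

/-!
Since `π_k(1 - θ) = π_k(θ)` and `π_k(1/2) = 1/2`, it suffices to take `θ > 1/2`. Then the
weight `w_{k,n}(θ)` differs from `θ` only when `2n ≤ k`, i.e. when the binomial count `n`
lies at distance at least `k(θ - 1/2)` below its mean `kθ`, so by Chebyshev's inequality
(the variance of the Bernstein weights is `kθ(1 - θ)`) we get `0 ≤ θ - π_k(θ) = O(1/k)`.
-/

section Bernstein

variable {R : Type*}

theorem sum_eval_bernsteinPolynomial [CommRing R] (k : ℕ) (θ : R) :
    ∑ n ∈ range (k + 1), (bernsteinPolynomial R k n).eval θ = 1 := by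
  simpa [Polynomial.eval_finsetSum] using
    congrArg (Polynomial.eval θ) (bernsteinPolynomial.sum R k)

theorem sum_sq_mul_eval_bernsteinPolynomial [CommRing R] (k : ℕ) (θ : R) :
    ∑ n ∈ range (k + 1), (k * θ - n) ^ 2 * (bernsteinPolynomial R k n).eval θ
      = k * θ * (1 - θ) := by
  simpa [Polynomial.eval_finsetSum, nsmul_eq_mul, mul_assoc] using
    congrArg (Polynomial.eval θ) (bernsteinPolynomial.variance R k)

variable [Field R] [LinearOrder R] [IsStrictOrderedRing R]

theorem eval_bernsteinPolynomial_nonneg {θ : R} (h0 : 0 ≤ θ) (h1 : θ ≤ 1) (k n : ℕ) :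
    0 ≤ (bernsteinPolynomial R k n).eval θ := by
  simp only [bernsteinPolynomial, Polynomial.eval_mul, Polynomial.eval_pow,
    Polynomial.eval_natCast, Polynomial.eval_X, Polynomial.eval_sub, Polynomial.eval_one]
  have : 0 ≤ 1 - θ := sub_nonneg.2 h1
  positivity

/-- Chebyshev's inequality for the binomial distribution. -/
theorem sum_eval_bernsteinPolynomial_le_of_le_abs {θ ε : R} (h0 : 0 ≤ θ) (h1 : θ ≤ 1)
    (hε : 0 < ε) {k : ℕ} {s : Finset ℕ} (hs : s ⊆ range (k + 1))
    (hfar : ∀ n ∈ s, ε ≤ |k * θ - n|) :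
    ∑ n ∈ s, (bernsteinPolynomial R k n).eval θ ≤ k * θ * (1 - θ) / ε ^ 2 := by
  have hb := eval_bernsteinPolynomial_nonneg h0 h1 k
  rw [le_div_iff₀ (by positivity), ← sum_sq_mul_eval_bernsteinPolynomial, sum_mul]
  calc ∑ n ∈ s, (bernsteinPolynomial R k n).eval θ * ε ^ 2
      ≤ ∑ n ∈ s, (k * θ - n) ^ 2 * (bernsteinPolynomial R k n).eval θ := by
        refine sum_le_sum fun n hn => ?_
        rw [mul_comm, ← sq_abs (k * θ - n)]
        exact mul_le_mul_of_nonneg_right (pow_le_pow_left₀ hε.le (hfar n hn) 2) (hb n)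
    _ ≤ ∑ n ∈ range (k + 1), (k * θ - n) ^ 2 * (bernsteinPolynomial R k n).eval θ :=
        sum_le_sum_of_subset_of_nonneg hs fun n _ _ => mul_nonneg (sq_nonneg _) (hb n)

end Bernstein

theorem acc_eq_sum_mul_eval_bernsteinPolynomial (k : ℕ) (θ : ℝ) :
    acc k θ = ∑ n ∈ range (k + 1), w k n θ * (bernsteinPolynomial ℝ k n).eval θ := by
  refine sum_congr rfl fun n _ => ?_
  simp only [bernsteinPolynomial, Polynomial.eval_mul, Polynomial.eval_pow,
    Polynomial.eval_natCast, Polynomial.eval_X, Polynomial.eval_sub, Polynomial.eval_one]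
  ring

theorem w_sub_one_sub {k n : ℕ} (hn : n ≤ k) (θ : ℝ) : w k (k - n) (1 - θ) = w k n θ := by
  unfold w
  split_ifs <;> first | ring1 | (exfalso; omega)

theorem acc_one_sub (k : ℕ) (θ : ℝ) : acc k (1 - θ) = acc k θ := by
  unfold acc
  rw [← sum_range_reflect]
  refine sum_congr rfl fun n hn => ?_
  have hnk : n ≤ k := Nat.lt_succ_iff.mp (mem_range.mp hn)
  rw [show k + 1 - 1 - n = k - n by omega, w_sub_one_sub hnk, Nat.choose_symm hnk,
    Nat.sub_sub_self hnk, sub_sub_cancel]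
  ring

theorem acc_half (k : ℕ) : acc k (1 / 2) = 1 / 2 := by
  have hw : ∀ n, w k n (1 / 2) = 1 / 2 := fun n => by
    unfold w
    split_ifs <;> norm_num
  rw [acc_eq_sum_mul_eval_bernsteinPolynomial]
  simp only [hw, ← mul_sum, sum_eval_bernsteinPolynomial, mul_one]

theorem acc_le_self {θ : ℝ} (hθ : 1 / 2 ≤ θ) (h1 : θ ≤ 1) (k : ℕ) :
    acc k θ ≤ θ := by
  have hw : ∀ n, w k n θ ≤ θ := fun n => by
    unfold w
    split_ifs <;> linarith
  calc acc k θ ≤ ∑ n ∈ range (k + 1), θ * (bernsteinPolynomial ℝ k n).eval θ := by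
        rw [acc_eq_sum_mul_eval_bernsteinPolynomial]
        exact sum_le_sum fun n _ => mul_le_mul_of_nonneg_right (hw n)
          (eval_bernsteinPolynomial_nonneg (by linarith) h1 k n)
    _ = θ := by rw [← mul_sum, sum_eval_bernsteinPolynomial, mul_one]

theorem sub_acc_le_sum_filter {θ : ℝ} (hθ : 1 / 2 ≤ θ) (h1 : θ ≤ 1) (k : ℕ) :
    θ - acc k θ ≤ (2 * θ - 1) *
      ∑ n ∈ range (k + 1) with 2 * n ≤ k, (bernsteinPolynomial ℝ k n).eval θ := by
  have hgap : ∀ n, θ - w k n θ ≤ if 2 * n ≤ k then 2 * θ - 1 else 0 := fun n => by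
    unfold w
    split_ifs <;> linarith
  have hb := eval_bernsteinPolynomial_nonneg (by linarith) h1 k
  calc θ - acc k θ
      = ∑ n ∈ range (k + 1), (θ - w k n θ) * (bernsteinPolynomial ℝ k n).eval θ := by
        rw [acc_eq_sum_mul_eval_bernsteinPolynomial]
        simp only [sub_mul, sum_sub_distrib, ← mul_sum, sum_eval_bernsteinPolynomial, mul_one]
    _ ≤ ∑ n ∈ range (k + 1),
          (if 2 * n ≤ k then 2 * θ - 1 else 0) * (bernsteinPolynomial ℝ k n).eval θ :=
        sum_le_sum fun n _ => mul_le_mul_of_nonneg_right (hgap n) (hb n)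
    _ = _ := by simp only [ite_mul, zero_mul, ← sum_filter, mul_sum]

theorem sub_acc_le_div {θ : ℝ} (hθ : 1 / 2 < θ) (h1 : θ ≤ 1) {k : ℕ} (hk : k ≠ 0) :
    θ - acc k θ ≤ 2 * θ * (1 - θ) / (θ - 1 / 2) / k := by
  have hδ : 0 < θ - 1 / 2 := by linarith
  have hkpos : (0 : ℝ) < k := by positivity
  have htail := sum_eval_bernsteinPolynomial_le_of_le_abs (k := k) (by linarith) h1
    (mul_pos hkpos hδ) (filter_subset _ _) fun n hn => by
      have : (2 * n : ℝ) ≤ k := by exact_mod_cast (mem_filter.mp hn).2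
      exact le_trans (by linarith) (le_abs_self _)
  calc θ - acc k θ
      ≤ (2 * θ - 1) * (k * θ * (1 - θ) / (k * (θ - 1 / 2)) ^ 2) :=
        (sub_acc_le_sum_filter hθ.le h1 k).trans
          (mul_le_mul_of_nonneg_left htail (by linarith))
    _ = 2 * θ * (1 - θ) / (θ - 1 / 2) / k := by
        field_simp

theorem tendsto_acc_of_half_lt {θ : ℝ} (hθ : 1 / 2 < θ) (h1 : θ ≤ 1) :
    Tendsto (fun k => acc k θ) atTop (nhds θ) := by
  rw [← tendsto_sub_nhds_zero_iff]
  refine squeeze_zero_norm' ?_ 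
    (tendsto_const_div_atTop_nhds_zero_nat (2 * θ * (1 - θ) / (θ - 1 / 2)))
  filter_upwards [eventually_ne_atTop 0] with k hk
  rw [norm_sub_rev, Real.norm_of_nonneg (sub_nonneg.2 (acc_le_self hθ.le h1 k))]
  exact sub_acc_le_div hθ h1 hk

theorem accuracy_tendsto_ideal (θ : ℝ) (h0 : 0 ≤ θ) (h1 : θ ≤ 1) :
    Tendsto (fun k => acc k θ) atTop (nhds (max θ (1 - θ))) := by
  rcases lt_trichotomy θ (1 / 2) with h | rfl | h
  · rw [max_eq_right (by linarith)]
    simpa only [acc_one_sub] using tendsto_acc_of_half_lt (θ := 1 - θ) (by linarith) (by linarith)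
  · norm_num only [acc_half, max_self, tendsto_const_nhds]
  · rw [max_eq_left (by linarith)]
    exact tendsto_acc_of_half_lt h h1
end

section
/- For every real number θ with 0 ≤ θ ≤ 1, the partial sums Σ_{i=1}^{a} θ^i·(1−θ)^i·C_{i−1} converge, as a → ∞, to min(θ, 1−θ), where C_n denotes the n-th Catalan number. -/
/-!
Put `m = min θ (1 - θ) ≤ 1/2` and `x = θ (1 - θ) = m (1 - m)`, so that `m` is the smaller root of
`L = x + L ^ 2`. The Catalan convolution makes the partial sums `S N = ∑_{n<N} C_n x^(n+1)` satisfy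
`S (N + 1) ≤ x + S N ^ 2 ≤ S (2 N + 1)`. The first inequality keeps `S` below `m`, so `S` increases
to a limit `L ≤ m`; the second gives `x + L ^ 2 ≤ L`, i.e. `L` lies between the two roots, so `L = m`.
-/

open Finset Filter

def CatalanRecurrence {R : Type*} [NonUnitalNonAssocSemiring R] (a : ℕ → R) : Prop :=
  ∀ n, a (n + 1) = ∑ j ∈ range (n + 1), a j * a (n - j)

namespace CatalanRecurrence

variable {R : Type*}

theorem sum_range_succ [NonUnitalNonAssocSemiring R] {a : ℕ → R} (h : CatalanRecurrence a)
    (N : ℕ) :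
    ∑ n ∈ range (N + 1), a n = a 0 + ∑ i ∈ range N, ∑ j ∈ range (N - i), a i * a j := by
  rw [Finset.sum_range_succ', add_comm, ← sum_range_diag_flip]
  exact congrArg _ (sum_congr rfl fun n _ => h n)

variable [Semiring R] [PartialOrder R] [IsOrderedRing R] {a : ℕ → R}

theorem sum_range_succ_le (h : CatalanRecurrence a) (ha : ∀ n, 0 ≤ a n) (N : ℕ) :
    ∑ n ∈ range (N + 1), a n ≤ a 0 + (∑ n ∈ range N, a n) ^ 2 := by
  rw [h.sum_range_succ, sq, sum_mul_sum]
  gcongr with i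
  · exact fun j _ _ => mul_nonneg (ha i) (ha j)
  · exact Nat.sub_le N i

theorem add_sq_sum_range_le (h : CatalanRecurrence a) (ha : ∀ n, 0 ≤ a n) (N : ℕ) :
    a 0 + (∑ n ∈ range N, a n) ^ 2 ≤ ∑ n ∈ range (2 * N + 1), a n := by
  rw [h.sum_range_succ, sq, sum_mul_sum]
  gcongr
  calc ∑ i ∈ range N, ∑ j ∈ range N, a i * a j
      ≤ ∑ i ∈ range N, ∑ j ∈ range (2 * N - i), a i * a j := by
        gcongr with i hi
        · exact fun j _ _ => mul_nonneg (ha i) (ha j)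
        · have := mem_range.1 hi; omega
    _ ≤ ∑ i ∈ range (2 * N), ∑ j ∈ range (2 * N - i), a i * a j :=
        sum_le_sum_of_subset_of_nonneg (range_subset_range.2 (by omega : N ≤ 2 * N))
          fun i _ _ => sum_nonneg fun j _ => mul_nonneg (ha i) (ha j)

end CatalanRecurrence

theorem catalanRecurrence_catalan_mul_pow {R : Type*} [CommSemiring R] (x : R) :
    CatalanRecurrence fun n => (catalan n : R) * x ^ (n + 1) := by
  intro n
  dsimp only
  rw [catalan_succ, Nat.cast_sum,
    Fin.sum_univ_eq_sum_range (fun j => ((catalan j * catalan (n - j) : ℕ) : R)), sum_mul]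
  refine sum_congr rfl fun j hj => ?_
  have hjn : j + 1 + (n - j + 1) = n + 1 + 1 := by have := mem_range.1 hj; omega
  rw [Nat.cast_mul, ← hjn, pow_add]
  ring

theorem tendsto_of_monotone_of_sq_bounds {S : ℕ → ℝ} {m : ℝ} (hS : Monotone S)
    (h0 : 0 ≤ S 0) (hm : S 0 ≤ m) (hm2 : m ≤ 1 - m)
    (hupper : ∀ N, S (N + 1) ≤ m * (1 - m) + S N ^ 2)
    (hlower : ∀ N, ∃ M, m * (1 - m) + S N ^ 2 ≤ S M) :
    Tendsto S atTop (nhds m) := by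
  have hbound : ∀ N, S N ≤ m := by
    intro N
    induction N with
    | zero => exact hm
    | succ N ih =>
      have : S N ^ 2 ≤ m ^ 2 := pow_le_pow_left₀ (h0.trans (hS (Nat.zero_le N))) ih 2
      nlinarith [hupper N]
  have hbdd : BddAbove (Set.range S) := ⟨m, Set.forall_mem_range.2 hbound⟩
  have hlim := tendsto_atTop_ciSup hS hbdd
  set L := ⨆ N, S N
  have hLm : L ≤ m := ciSup_le hbound
  have hfixed : m * (1 - m) + L ^ 2 ≤ L := by
    refine le_of_tendsto (tendsto_const_nhds.add (hlim.pow 2)) (Eventually.of_forall fun N => ?_)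
    obtain ⟨M, hM⟩ := hlower N
    exact hM.trans (le_ciSup hbdd M)
  -- `m * (1 - m) + L ^ 2 - L = (L - m) * (L - (1 - m))`, a product of two nonpositive factors.
  have : L = m := by nlinarith
  rwa [this] at hlim

theorem sum_Icc_one_eq_sum_range {M : Type*} [AddCommMonoid M] (f : ℕ → M) (a : ℕ) :
    ∑ i ∈ Icc 1 a, f i = ∑ n ∈ range a, f (n + 1) := by
  induction a with
  | zero => simp
  | succ a ih => rw [sum_Icc_succ_top (by omega), ih, Finset.sum_range_succ]

theorem tendsto_sum_range_catalan_mul_pow {m : ℝ} (hm0 : 0 ≤ m) (hm : m ≤ 1 - m) :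
    Tendsto (fun N => ∑ n ∈ range N, (catalan n : ℝ) * (m * (1 - m)) ^ (n + 1)) atTop (nhds m) := by
  set a : ℕ → ℝ := fun n => catalan n * (m * (1 - m)) ^ (n + 1)
  have ha : ∀ n, 0 ≤ a n := fun n => by have : 0 ≤ 1 - m := hm0.trans hm; positivity
  have hrec : CatalanRecurrence a := catalanRecurrence_catalan_mul_pow _
  refine tendsto_of_monotone_of_sq_bounds
    (fun _ _ hMN => sum_le_sum_of_subset_of_nonneg (range_subset_range.2 hMN) fun n _ _ => ha n)
    le_rfl (by simpa using hm0) hm (fun N => ?_) (fun N => ⟨2 * N + 1, ?_⟩)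
  · simpa [a] using hrec.sum_range_succ_le ha N
  · simpa [a] using hrec.add_sq_sum_range_le ha N

theorem catalan_partial_sums_tendsto_min (θ : ℝ) (h0 : 0 ≤ θ) (h1 : θ ≤ 1) :
    Tendsto (fun a : ℕ => ∑ i ∈ Finset.Icc 1 a, θ ^ i * (1 - θ) ^ i * (catalan (i - 1) : ℝ))
      atTop (nhds (min θ (1 - θ))) := by
  have hmin : min θ (1 - θ) ≤ 1 - min θ (1 - θ) ∧
      θ * (1 - θ) = min θ (1 - θ) * (1 - min θ (1 - θ)) := by
    rcases le_total θ (1 - θ) with h | h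
    · rw [min_eq_left h]; exact ⟨by linarith, rfl⟩
    · rw [min_eq_right h]; exact ⟨by linarith, by ring⟩
  have hlim := tendsto_sum_range_catalan_mul_pow (le_min h0 (by linarith)) hmin.1
  rw [← hmin.2] at hlim
  refine hlim.congr fun N => ?_
  rw [sum_Icc_one_eq_sum_range]
  refine sum_congr rfl fun n _ => ?_
  rw [Nat.add_sub_cancel, ← mul_pow]
  ring
end

section
/- For every real number θ with 0 ≤ θ ≤ 1, the sequence a ↦ 2·(a+1)·C_a·θ^{a+1}·(1−θ)^{a+1} converges to 0 as a → ∞, where C_n denotes the n-th Catalan number. -/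
open Filter Topology

/- Since `(a + 1) C_a = binom(2a, a)` and `θ (1 - θ) ≤ 1/4`, the term is at most
`2 binom(2a, a) / 4 ^ (a + 1)`. The elementary bound `(n + 1) binom(2n, n)² ≤ 16 ⁿ`
shows that this is `O(1 / √a)`. -/

namespace Nat

theorem succ_mul_centralBinom_sq_le_sixteen_pow (n : ℕ) :
    (n + 1) * centralBinom n ^ 2 ≤ 16 ^ n := by
  induction n with
  | zero => simp
  | succ n ih =>
    have hrec := succ_mul_centralBinom_succ n
    -- `(2n + 1)² (n + 2) ≤ 4 (n + 1)³` lets the induction step absorb the factor `16`.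
    have hcubic : 4 * (2 * n + 1) ^ 2 * (n + 2) ≤ 16 * (n + 1) ^ 3 := by nlinarith
    refine Nat.le_of_mul_le_mul_left ?_ (show 0 < (n + 1) ^ 2 by positivity)
    calc (n + 1) ^ 2 * ((n + 1 + 1) * centralBinom (n + 1) ^ 2)
        = (n + 2) * ((n + 1) * centralBinom (n + 1)) ^ 2 := by ring
      _ = 4 * (2 * n + 1) ^ 2 * (n + 2) * centralBinom n ^ 2 := by rw [hrec]; ring
      _ ≤ 16 * (n + 1) ^ 3 * centralBinom n ^ 2 := by gcongr
      _ = 16 * (n + 1) ^ 2 * ((n + 1) * centralBinom n ^ 2) := by ring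
      _ ≤ 16 * (n + 1) ^ 2 * 16 ^ n := by gcongr
      _ = (n + 1) ^ 2 * 16 ^ (n + 1) := by ring

theorem centralBinom_div_four_pow_le_inv_sqrt (n : ℕ) :
    (n.centralBinom : ℝ) / 4 ^ n ≤ (√(n + 1))⁻¹ := by
  have hsq : ((n : ℝ) + 1) * (n.centralBinom : ℝ) ^ 2 ≤ (4 ^ n) ^ 2 := by
    rw [← pow_mul, mul_comm n, pow_mul]
    exact_mod_cast succ_mul_centralBinom_sq_le_sixteen_pow n
  have hroot : √(n + 1) * n.centralBinom ≤ 4 ^ n := by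
    simpa [Real.sqrt_mul, Real.sqrt_sq, abs_of_nonneg] using Real.sqrt_le_sqrt hsq
  rw [div_le_iff₀ (by positivity), inv_mul_eq_div, le_div_iff₀ (by positivity)]
  linarith

theorem tendsto_centralBinom_div_four_pow_atTop :
    Tendsto (fun n : ℕ => (n.centralBinom : ℝ) / 4 ^ n) atTop (𝓝 0) := by
  have hroot : Tendsto (fun n : ℕ => (√((n : ℝ) + 1))⁻¹) atTop (𝓝 0) :=
    tendsto_inv_atTop_zero.comp <| Real.tendsto_sqrt_atTop.comp <|
      tendsto_atTop_add_const_right _ 1 tendsto_natCast_atTop_atTop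
  exact squeeze_zero (fun n => by positivity) centralBinom_div_four_pow_le_inv_sqrt hroot

theorem tendsto_centralBinom_mul_pow_atTop {x : ℝ} (hx : |x| ≤ 1 / 4) :
    Tendsto (fun n : ℕ => (n.centralBinom : ℝ) * x ^ n) atTop (𝓝 0) := by
  refine squeeze_zero_norm (fun n => ?_) tendsto_centralBinom_div_four_pow_atTop
  rw [norm_mul, norm_pow, Real.norm_natCast, Real.norm_eq_abs, div_eq_mul_inv, ← inv_pow]
  gcongr
  simpa using hx

end Nat

theorem catalan_tail_term_tendsto_zero (θ : ℝ) (h0 : 0 ≤ θ) (h1 : θ ≤ 1) :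
    Tendsto (fun a : ℕ => 2 * ((a : ℝ) + 1) * (catalan a : ℝ) * θ ^ (a + 1) * (1 - θ) ^ (a + 1))
      atTop (nhds 0) := by
  have hx : |θ * (1 - θ)| ≤ 1 / 4 := abs_le.2 ⟨by nlinarith, by nlinarith [sq_nonneg (2 * θ - 1)]⟩
  have hterm : ∀ a : ℕ, 2 * ((a : ℝ) + 1) * (catalan a : ℝ) * θ ^ (a + 1) * (1 - θ) ^ (a + 1)
      = 2 * (θ * (1 - θ)) * ((a.centralBinom : ℝ) * (θ * (1 - θ)) ^ a) := by
    intro a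
    rw [← succ_mul_catalan_eq_centralBinom, mul_pow]
    push_cast
    ring
  simpa [hterm] using (Nat.tendsto_centralBinom_mul_pow_atTop hx).const_mul (2 * (θ * (1 - θ)))
end

section
/- For every real number z with 0 ≤ z ≤ 1/4, the Catalan number generating series converges and satisfies Σ_{k=0}^{∞} C_k·z^k = 2 / (1 + √(1 − 4z)), where C_k denotes the k-th Catalan number. -/
/-!
The Catalan recursion `C (n + 1) = ∑_{i + j = n} C i * C j` says, via the Cauchy product, that
`S = ∑ C k * z ^ k` satisfies `z * S ^ 2 = S - 1`, so that `(1 - 2 * z * S) ^ 2 = 1 - 4 * z`.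
Convergence up to and including `z = 1 / 4` comes from the telescoping identity
`∑_{k < n} C k / 4 ^ k = 2 - 2 * centralBinom n / 4 ^ n`: the partial sums are at most `2`,
hence `S ≤ 2`, which forces `1 - 2 * z * S ≥ 0` and so picks the root `S = 2 / (1 + √(1 - 4 * z))`.
-/

open Finset

theorem catalan_eq_two_mul_centralBinom_sub (n : ℕ) :
    (catalan n : ℝ) = 2 * n.centralBinom - (n + 1).centralBinom / 2 := by
  have hcat : ((n : ℝ) + 1) * catalan n = n.centralBinom := by
    exact_mod_cast succ_mul_catalan_eq_centralBinom n
  have hcb : ((n : ℝ) + 1) * (n + 1).centralBinom = 2 * (2 * n + 1) * n.centralBinom := by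
    exact_mod_cast Nat.succ_mul_centralBinom_succ n
  refine mul_left_cancel₀ (n.cast_add_one_ne_zero (R := ℝ)) ?_
  linear_combination hcat + hcb / 2

theorem sum_range_catalan_div_four_pow (n : ℕ) :
    ∑ k ∈ range n, (catalan k : ℝ) / 4 ^ k = 2 - 2 * n.centralBinom / 4 ^ n := by
  induction n with
  | zero => simp
  | succ n ih =>
    rw [sum_range_succ, ih, catalan_eq_two_mul_centralBinom_sub, pow_succ]
    field_simp
    ring

theorem sum_range_catalan_mul_pow_le_two {z : ℝ} (hz₀ : 0 ≤ z) (hz : z ≤ 1 / 4) (n : ℕ) :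
    ∑ k ∈ range n, (catalan k : ℝ) * z ^ k ≤ 2 :=
  calc ∑ k ∈ range n, (catalan k : ℝ) * z ^ k
      ≤ ∑ k ∈ range n, (catalan k : ℝ) / 4 ^ k := by
        gcongr with k
        rw [div_eq_mul_inv, ← inv_pow]
        gcongr
        linarith
    _ = 2 - 2 * n.centralBinom / 4 ^ n := sum_range_catalan_div_four_pow n
    _ ≤ 2 := by
        have : 0 ≤ 2 * (n.centralBinom : ℝ) / 4 ^ n := by positivity
        linarith

theorem mul_sq_tsum_catalan_mul_pow {R : Type*} [NormedCommRing R] [CompleteSpace R] {z : R}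
    (hz : Summable fun k ↦ ‖(catalan k : R) * z ^ k‖) :
    z * (∑' k, (catalan k : R) * z ^ k) ^ 2 = (∑' k, (catalan k : R) * z ^ k) - 1 := by
  set f : ℕ → R := fun k ↦ catalan k * z ^ k
  set S := ∑' k, f k
  have hconv (n : ℕ) : z * ∑ ij ∈ antidiagonal n, f ij.1 * f ij.2 = f (n + 1) := by
    have hterm (ij : ℕ × ℕ) (hij : ij ∈ antidiagonal n) :
        f ij.1 * f ij.2 = (catalan ij.1 * catalan ij.2 : ℕ) * z ^ n := by
      rw [← mem_antidiagonal.mp hij, pow_add]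
      push_cast
      ring
    simp only [sum_congr rfl hterm, ← sum_mul, ← Nat.cast_sum, ← catalan_succ', f, pow_succ]
    ring
  have hprod : HasSum (fun n ↦ z * ∑ ij ∈ antidiagonal n, f ij.1 * f ij.2) (z * (S * S)) := by
    rw [tsum_mul_tsum_eq_tsum_sum_antidiagonal_of_summable_norm hz hz]
    exact ((summable_norm_sum_mul_antidiagonal_of_summable_norm hz hz).of_norm.hasSum).mul_left z
  have hshift : HasSum (fun n ↦ f (n + 1)) (S - 1) := by
    simpa [f] using (hasSum_nat_add_iff' 1).mpr hz.of_norm.hasSum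
  rw [sq]
  exact (funext hconv ▸ hprod).unique hshift

theorem eq_two_div_one_add_sqrt_of_mul_sq_eq {z S : ℝ} (h : z * S ^ 2 = S - 1)
    (hS : 2 * z * S ≤ 1) : S = 2 / (1 + √(1 - 4 * z)) := by
  have hsqrt : √(1 - 4 * z) = 1 - 2 * z * S := by
    rw [show 1 - 4 * z = (1 - 2 * z * S) ^ 2 by linear_combination (-4 * z) * h]
    exact Real.sqrt_sq (by linarith)
  have hne : 1 + (1 - 2 * z * S) ≠ 0 := by
    intro h0
    nlinarith
  rw [hsqrt, eq_div_iff hne]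
  linear_combination (-2) * h

theorem catalan_generating_function (z : ℝ) (h0 : 0 ≤ z) (h1 : z ≤ 1 / 4) :
    HasSum (fun k : ℕ => (catalan k : ℝ) * z ^ k) (2 / (1 + Real.sqrt (1 - 4 * z))) := by
  have hnonneg (k : ℕ) : 0 ≤ (catalan k : ℝ) * z ^ k := by positivity
  have hpartial := sum_range_catalan_mul_pow_le_two h0 h1
  have hsum : Summable fun k ↦ (catalan k : ℝ) * z ^ k := summable_of_sum_range_le hnonneg hpartial
  have hS : ∑' k, (catalan k : ℝ) * z ^ k ≤ 2 := Real.tsum_le_of_sum_range_le hnonneg hpartial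
  refine hsum.hasSum_iff.mpr (eq_two_div_one_add_sqrt_of_mul_sq_eq ?_ (by nlinarith))
  exact mul_sq_tsum_catalan_mul_pow (by simpa only [Real.norm_eq_abs, summable_abs_iff] using hsum)
end

section
/- The central binomial coefficients satisfy the Stirling-type asymptotic for Catalan numbers: lim_{a→∞} C_a · √(π·a³) / 4^a = 1, where C_a denotes the a-th Catalan number. -/
/-!
Write `n! = s n · √(2n) · (n/e)^n`, where `s = Stirling.stirlingSeq` tends to `√π`. Then
`centralBinom n · √(πn) / 4^n = s (2n) / (s n)^2 · √π → 1`, and since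
`C_n = centralBinom n / (n + 1)`, the Catalan quotient is this one times `n / (n + 1) → 1`.
-/

open Filter Real Stirling

theorem centralBinom_mul_sqrt_div_four_pow {n : ℕ} (hn : n ≠ 0) :
    (n.centralBinom : ℝ) * √(π * n) / 4 ^ n = stirlingSeq (2 * n) / stirlingSeq n ^ 2 * √π := by
  rw [Nat.centralBinom_eq_two_mul_choose, Nat.cast_choose ℝ (by omega : n ≤ 2 * n),
    show 2 * n - n = n by omega, stirlingSeq, stirlingSeq]
  push_cast
  rw [sqrt_mul pi_pos.le, show (2 : ℝ) * (2 * n) = 2 ^ 2 * n by ring, sqrt_mul (by norm_num),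
    sqrt_sq (by norm_num), sqrt_mul (by norm_num) (n : ℝ)]
  field_simp
  rw [sq_sqrt (by norm_num), pow_mul, mul_div_assoc, mul_pow]
  ring

theorem tendsto_centralBinom_mul_sqrt_div_four_pow :
    Tendsto (fun n : ℕ => (n.centralBinom : ℝ) * √(π * n) / 4 ^ n) atTop (nhds 1) := by
  have hπ : √π ≠ 0 := (sqrt_pos.mpr pi_pos).ne'
  have hlim := ((tendsto_stirlingSeq_sqrt_pi.comp (tendsto_id.const_mul_atTop' two_pos)).div
    (tendsto_stirlingSeq_sqrt_pi.pow 2) (pow_ne_zero 2 hπ)).mul_const √π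
  rw [show √π / √π ^ 2 * √π = 1 by field_simp] at hlim
  refine hlim.congr' ?_
  filter_upwards [eventually_ne_atTop 0] with n hn
  exact (centralBinom_mul_sqrt_div_four_pow hn).symm

theorem catalan_mul_sqrt_div_four_pow (n : ℕ) :
    (catalan n : ℝ) * √(π * n ^ 3) / 4 ^ n
      = (n.centralBinom : ℝ) * √(π * n) / 4 ^ n * (n / (n + 1)) := by
  have hcat : ((n : ℝ) + 1) * catalan n = n.centralBinom := by
    exact_mod_cast succ_mul_catalan_eq_centralBinom n
  rw [← hcat, show (π * n ^ 3 : ℝ) = n ^ 2 * (π * n) by ring, sqrt_mul (by positivity),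
    sqrt_sq (by positivity)]
  field_simp

theorem catalan_stirling_asymptotic :
    Tendsto (fun a : ℕ => (catalan a : ℝ) * Real.sqrt (Real.pi * (a : ℝ) ^ 3) / 4 ^ a)
      atTop (nhds 1) := by
  simp_rw [catalan_mul_sqrt_div_four_pow]
  simpa using
    tendsto_centralBinom_mul_sqrt_div_four_pow.mul (tendsto_natCast_div_add_atTop (1 : ℝ))
end

section
/- Define W_{i,j} := (−1)^j · binom(i,j) · C_{i−1} for integers 0 ≤ j ≤ i with i ≥ 1, and W_{i,j} := 0 otherwise. Then for every natural number t ≥ 1, Σ_{i=1}^{t} W_{i, t−i} equals 1 if t = 1 and equals 0 if t ≥ 2. -/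
/-!
The shifted Catalan series `c = ∑ C_{i-1} X^i` satisfies `c - c² = X`, and the antidiagonal sum
is the `t`-th coefficient of `g = c(X - X²)`, because `(X - X²)^i = X^i (1 - X)^i`. Substituting,
`g - g² = X - X²`, so `(g - X)(1 - g - X) = 0`; as `1 - g - X` is a unit, `g = X`.
-/

open Finset

/-- The coefficients `W_{i,j}`. -/
noncomputable def W (i j : ℕ) : ℝ :=
  if 1 ≤ i ∧ j ≤ i then (-1 : ℝ) ^ j * (i.choose j : ℝ) * (catalan (i - 1) : ℝ) else 0

namespace PowerSeries

variable {R : Type*} [CommRing R]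

theorem coeff_one_sub_X_pow (n k : ℕ) :
    coeff k ((1 - X : R⟦X⟧) ^ n) = (-1) ^ k * n.choose k := by
  induction n generalizing k with
  | zero => cases k <;> simp [coeff_one]
  | succ n ih =>
    cases k with
    | zero => simp
    | succ k =>
      rw [pow_succ, mul_sub, mul_one, map_sub, coeff_succ_mul_X, ih, ih, Nat.choose_succ_succ']
      push_cast
      ring

theorem coeff_X_sub_X_sq_pow (n k : ℕ) :
    coeff k ((X - X ^ 2 : R⟦X⟧) ^ n) =
      if n ≤ k then (-1) ^ (k - n) * (n.choose (k - n) : R) else 0 := by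
  rw [show (X - X ^ 2 : R⟦X⟧) = X * (1 - X) by ring, mul_pow, coeff_X_pow_mul',
    coeff_one_sub_X_pow]

theorem constantCoeff_X_sub_X_sq : constantCoeff (X - X ^ 2 : R⟦X⟧) = 0 := by
  simp

theorem hasSubst_X_sub_X_sq : HasSubst (X - X ^ 2 : R⟦X⟧) :=
  HasSubst.of_constantCoeff_zero' constantCoeff_X_sub_X_sq

theorem coeff_subst_X_sub_X_sq (f : R⟦X⟧) (k : ℕ) :
    coeff k (f.subst (X - X ^ 2)) =
      ∑ n ∈ range (k + 1), coeff n f * ((-1) ^ (k - n) * (n.choose (k - n) : R)) := by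
  rw [coeff_subst' hasSubst_X_sub_X_sq, finsum_eq_sum_of_support_subset (s := range (k + 1))]
  · refine sum_congr rfl fun n hn => ?_
    rw [coeff_X_sub_X_sq_pow, if_pos (by simpa [Nat.lt_succ_iff] using hn), smul_eq_mul]
  · intro n hn
    contrapose! hn
    rw [Function.notMem_support, coeff_X_sub_X_sq_pow,
      if_neg (by simpa [Nat.lt_succ_iff] using hn), smul_zero]

theorem eq_X_of_sub_sq_eq {g : R⟦X⟧} (hg : constantCoeff g = 0) (h : g - g ^ 2 = X - X ^ 2) :
    g = X := by
  have hunit : IsUnit (1 - g - X) := isUnit_iff_constantCoeff.mpr (by simp [hg])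
  have hprod : (1 - g - X) * (g - X) = 0 := by linear_combination h
  exact sub_eq_zero.mp (hunit.mul_right_eq_zero.mp hprod)

theorem X_mul_catalanSeries_sub_sq :
    X * catalanSeries.map (Nat.castRingHom R) - (X * catalanSeries.map (Nat.castRingHom R)) ^ 2
      = X := by
  have h := congrArg (map (Nat.castRingHom R)) catalanSeries_sq_mul_X_add_one
  simp only [map_add, map_mul, map_pow, map_X, map_one] at h
  linear_combination (-X) * h

theorem subst_X_sub_X_sq_X_mul_catalanSeries :
    (X * catalanSeries.map (Nat.castRingHom R)).subst (X - X ^ 2 : R⟦X⟧) = X := by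
  apply eq_X_of_sub_sq_eq
  · exact constantCoeff_subst_eq_zero constantCoeff_X_sub_X_sq _ (by simp)
  · rw [← subst_pow hasSubst_X_sub_X_sq, ← subst_sub hasSubst_X_sub_X_sq,
      X_mul_catalanSeries_sub_sq, subst_X hasSubst_X_sub_X_sq]

end PowerSeries

theorem W_of_one_le {i : ℕ} (hi : 1 ≤ i) (j : ℕ) :
    W i j = (-1 : ℝ) ^ j * (i.choose j : ℝ) * (catalan (i - 1) : ℝ) := by
  rw [W]
  split_ifs with h
  · rfl
  · rw [Nat.choose_eq_zero_of_lt (by omega), Nat.cast_zero, mul_zero, zero_mul]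

open PowerSeries in
theorem W_antidiagonal_sum_general (t : ℕ) :
    ∑ i ∈ Finset.Icc 1 t, W i (t - i) = if t = 1 then 1 else 0 := by
  rw [← coeff_X (R := ℝ), ← subst_X_sub_X_sq_X_mul_catalanSeries, coeff_subst_X_sub_X_sq,
    range_eq_Ico, sum_eq_sum_Ico_succ_bot t.add_one_pos, coeff_zero_X_mul, zero_mul, zero_add,
    Ico_add_one_right_eq_Icc]
  refine sum_congr rfl fun i hi => ?_
  obtain ⟨j, rfl⟩ := Nat.exists_eq_add_of_le' (mem_Icc.mp hi).1
  rw [W_of_one_le (Nat.le_add_left 1 j), coeff_succ_X_mul, coeff_map, catalanSeries_coeff]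
  simp only [Nat.add_sub_cancel, eq_natCast]
  ring

theorem W_antidiagonal_sum (t : ℕ) (ht : 1 ≤ t) :
    ∑ i ∈ Finset.Icc 1 t, W i (t - i) = if t = 1 then 1 else 0 :=
  W_antidiagonal_sum_general t
end

section
/- Define T_{k,n}(θ) := w_{k,n}(θ) · binom(k,n) · θ^n · (1−θ)^{k−n} for integers 0 ≤ n ≤ k and T_{k,n}(θ) := 0 otherwise, where w_{k,n}(θ) := 1−θ if 2n < k, := 1/2 if 2n = k, and := θ if 2n > k. Define forward and backward weights by W→_{k,n}(θ) := 2θ² if 2n = k and := θ otherwise, and W←_{k,n}(θ) := 2(1−θ)² if 2n = k and := 1−θ otherwise. Then for every natural number k, every integer n, and every real θ, one has T_{k+1, n+1}(θ) = W→_{k,n}(θ)·T_{k,n}(θ) + W←_{k,n+1}(θ)·T_{k,n+1}(θ). -/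
/-- The summand `T_{k,n}`, defined for integer `n` and zero outside `0 ≤ n ≤ k`. -/
noncomputable def T (k : ℕ) (n : ℤ) (θ : ℝ) : ℝ :=
  if 0 ≤ n ∧ n ≤ (k : ℤ) then
    w k n.toNat θ * (k.choose n.toNat : ℝ) * θ ^ n.toNat * (1 - θ) ^ (k - n.toNat)
  else 0

/-- The forward weight `W→_{k,n}`. -/
noncomputable def Wf (k : ℕ) (n : ℤ) (θ : ℝ) : ℝ :=
  if 2 * n = (k : ℤ) then 2 * θ ^ 2 else θ

/-- The backward weight `W←_{k,n}`. -/
noncomputable def Wb (k : ℕ) (n : ℤ) (θ : ℝ) : ℝ :=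
  if 2 * n = (k : ℤ) then 2 * (1 - θ) ^ 2 else 1 - θ

/-!
`T_{k,n}` is the weight `w_{k,n}` times the Bernstein basis polynomial `b_{k,n}(θ)`, and the
Bernstein polynomials satisfy Pascal's rule `b_{k+1,n+1} = θ b_{k,n} + (1 - θ) b_{k,n+1}`.
Away from the middle index the weights on both sides agree, so the recursion is Pascal's rule
multiplied by a common weight; at the middle the doubled weights `W` absorb the weight `1/2`, and
the only new input is the symmetry `θ b_{2m+1,m} = (1 - θ) b_{2m+1,m+1}` of an odd row.
-/

open Polynomial

namespace bernsteinPolynomial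

variable {R : Type*} [CommRing R]

theorem succ_succ (n ν : ℕ) :
    bernsteinPolynomial R (n + 1) (ν + 1) =
      X * bernsteinPolynomial R n ν + (1 - X) * bernsteinPolynomial R n (ν + 1) := by
  simp only [bernsteinPolynomial, Nat.choose_succ_succ', Nat.cast_add, Nat.add_sub_add_right]
  rcases le_or_gt (ν + 1) n with h | h
  · obtain ⟨j, rfl⟩ := Nat.exists_eq_add_of_le h
    rw [show ν + 1 + j - ν = j + 1 by omega, Nat.add_sub_cancel_left]
    ring
  · rw [Nat.choose_eq_zero_of_lt h]
    ring

theorem X_mul_middle (m : ℕ) :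
    X * bernsteinPolynomial R (2 * m + 1) m =
      (1 - X) * bernsteinPolynomial R (2 * m + 1) (m + 1) := by
  simp only [bernsteinPolynomial, Nat.choose_symm_half, show 2 * m + 1 - m = m + 1 by omega,
    show 2 * m + 1 - (m + 1) = m by omega]
  ring

end bernsteinPolynomial

theorem T_natCast (k m : ℕ) (θ : ℝ) :
    T k m θ = w k m θ * (bernsteinPolynomial ℝ k m).eval θ := by
  simp only [T, Int.toNat_natCast, bernsteinPolynomial, eval_mul, eval_natCast, eval_pow, eval_X,
    eval_sub, eval_one]
  split_ifs with h
  · ring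
  · rw [Nat.choose_eq_zero_of_lt (by omega)]
    simp

theorem T_of_neg {n : ℤ} (hn : n < 0) (k : ℕ) (θ : ℝ) : T k n θ = 0 :=
  if_neg (by omega)

theorem Wb_zero_mul_w_zero (k : ℕ) (θ : ℝ) : Wb k 0 θ * w k 0 θ = (1 - θ) ^ 2 := by
  unfold Wb w
  split_ifs <;> first | omega | ring

theorem w_succ_mul_pascal (k m : ℕ) (θ p q : ℝ) (hmid : k = 2 * m + 1 → θ * p = (1 - θ) * q) :
    w (k + 1) (m + 1) θ * (θ * p + (1 - θ) * q) =
      Wf k m θ * (w k m θ * p) + Wb k ((m + 1 : ℕ) : ℤ) θ * (w k (m + 1) θ * q) := by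
  unfold w Wf Wb
  split_ifs <;> first | omega | ring1 | linear_combination (θ - 1 / 2) * hmid (by omega)

theorem T_recursion (k : ℕ) (n : ℤ) (θ : ℝ) :
    T (k + 1) (n + 1) θ = Wf k n θ * T k n θ + Wb k (n + 1) θ * T k (n + 1) θ := by
  rcases lt_trichotomy n (-1) with hn | rfl | hn
  · simp only [T_of_neg (n := n) (by omega), T_of_neg (n := n + 1) (by omega), mul_zero,
      add_zero]
  · have hT0 (j : ℕ) : T j 0 θ = w j 0 θ * (1 - θ) ^ j := by
      simpa [bernsteinPolynomial] using T_natCast j 0 θ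
    rw [neg_add_cancel, T_of_neg (n := -1) (by omega), hT0, hT0, ← mul_assoc, Wb_zero_mul_w_zero,
      w, if_pos (by omega)]
    ring
  · obtain ⟨m, rfl⟩ := Int.eq_ofNat_of_zero_le (by omega : 0 ≤ n)
    rw [← Nat.cast_succ, T_natCast, T_natCast, T_natCast, bernsteinPolynomial.succ_succ]
    simp only [eval_add, eval_mul, eval_sub, eval_one, eval_X]
    refine w_succ_mul_pascal k m θ _ _ fun hk => ?_
    subst hk
    simpa only [eval_mul, eval_sub, eval_one, eval_X] using
      congrArg (eval θ) (bernsteinPolynomial.X_mul_middle (R := ℝ) m)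
end

section
/- For every natural number k and every real number θ with 0 < θ < 1 and θ ≠ 1/2, the accuracy of the frequent outcome approach is strictly below the accuracy of ideal prediction: π_k(θ) < max(θ, 1−θ). -/
open Finset

/-!
`acc k θ` is an average of the weights `w k n θ` against the binomial distribution, whose
probabilities are all positive when `0 < θ < 1`. Every weight is at most `max θ (1 - θ)`, and for
`θ ≠ 1/2` the weight of the least likely extreme outcome (`n = k` if `θ < 1/2`, `n = 0` if
`θ > 1/2`) is strictly smaller, so the average is strictly smaller too.
-/

theorem sum_mul_lt_of_le_of_exists_lt {ι : Type*} {s : Finset ι} {f p : ι → ℝ} {M : ℝ}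
    (hp : ∀ i ∈ s, 0 < p i) (hsum : ∑ i ∈ s, p i = 1) (hle : ∀ i ∈ s, f i ≤ M)
    (hlt : ∃ i ∈ s, f i < M) : ∑ i ∈ s, f i * p i < M :=
  calc ∑ i ∈ s, f i * p i < ∑ i ∈ s, M * p i :=
        Finset.sum_lt_sum (fun i hi => mul_le_mul_of_nonneg_right (hle i hi) (hp i hi).le)
          (hlt.imp fun i ⟨hi, hfi⟩ => ⟨hi, mul_lt_mul_of_pos_right hfi (hp i hi)⟩)
    _ = M := by rw [← Finset.mul_sum, hsum, mul_one]

noncomputable def binomialProb (k n : ℕ) (θ : ℝ) : ℝ :=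
  k.choose n * θ ^ n * (1 - θ) ^ (k - n)

theorem binomialProb_pos {k n : ℕ} {θ : ℝ} (hn : n ≤ k) (h0 : 0 < θ) (h1 : θ < 1) :
    0 < binomialProb k n θ := by
  have : 0 < k.choose n := Nat.choose_pos hn
  have : 0 < 1 - θ := by linarith
  unfold binomialProb
  positivity

theorem sum_binomialProb (k : ℕ) (θ : ℝ) : ∑ n ∈ range (k + 1), binomialProb k n θ = 1 := by
  calc ∑ n ∈ range (k + 1), binomialProb k n θ = (θ + (1 - θ)) ^ k := by
        rw [add_pow]
        exact Finset.sum_congr rfl fun n _ => by unfold binomialProb; ring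
    _ = 1 := by rw [add_sub_cancel, one_pow]

theorem acc_eq_sum_w_mul_binomialProb (k : ℕ) (θ : ℝ) :
    acc k θ = ∑ n ∈ range (k + 1), w k n θ * binomialProb k n θ := by
  simp only [acc, binomialProb, mul_assoc]

theorem w_le_max (k n : ℕ) (θ : ℝ) : w k n θ ≤ max θ (1 - θ) := by
  have : 1 / 2 ≤ max θ (1 - θ) := by
    rcases le_total θ (1 / 2) with h | h
    · exact le_max_of_le_right (by linarith)
    · exact le_max_of_le_left h
  unfold w
  split_ifs
  exacts [le_max_right _ _, this, le_max_left _ _]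

theorem w_self_lt_max {k : ℕ} {θ : ℝ} (hθ : θ < 1 / 2) : w k k θ < max θ (1 - θ) := by
  refine lt_max_of_lt_right ?_
  unfold w
  split_ifs <;> linarith

theorem w_zero_lt_max {k : ℕ} {θ : ℝ} (hθ : 1 / 2 < θ) : w k 0 θ < max θ (1 - θ) := by
  refine lt_max_of_lt_left ?_
  unfold w
  split_ifs <;> first | omega | linarith

theorem accuracy_lt_ideal (k : ℕ) (θ : ℝ) (h0 : 0 < θ) (h1 : θ < 1) (hne : θ ≠ 1 / 2) :
    acc k θ < max θ (1 - θ) := by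
  rw [acc_eq_sum_w_mul_binomialProb]
  refine sum_mul_lt_of_le_of_exists_lt
    (fun n hn => binomialProb_pos (Nat.lt_succ_iff.mp (mem_range.mp hn)) h0 h1)
    (sum_binomialProb k θ) (fun n _ => w_le_max k n θ) ?_
  rcases hne.lt_or_gt with hθ | hθ
  · exact ⟨k, self_mem_range_succ k, w_self_lt_max hθ⟩
  · exact ⟨0, mem_range.mpr k.succ_pos, w_zero_lt_max hθ⟩
end
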